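/- arXiv:2109.06646 — 3 statements merged into one kernel-verified Lean document; each statement's English description precedes it below -/
import Mathlib

section
/- Let ν be a nonnegative Borel measure on (0,∞) with no atoms and define the tail integral U_ν(x) = ν((x,∞)). Then the pushforward of ν under U_ν equals the Lebesgue measure restricted to the interval (0, U_ν(0)) (where U_ν(0) = ν((0,∞)) may be +∞). -/
/-!
The tail function `U x = ν (Ioi x)` is antitone and right-continuous; since `ν` has no atoms it is
left-continuous wherever it is finite a little to the left, and it tends to `0` at infinity. Hence
for a level `B` the set `{x > a | U x ≤ B}` is, up to one point, a ray `(c, ∞)` with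
`U c = min B (U a)`, so its measure is `min B (U a)`. For `a = 0` this says that the image of `ν`
under `U` gives `(-∞, t]` the mass `min t (U 0)`, as does Lebesgue measure on `(0, U 0)`, and two
measures on `ℝ` that agree and are finite on all rays `(-∞, t]` coincide.
-/

open MeasureTheory Set Filter Topology
open scoped ENNReal

theorem antitone_measure_Ioi {α : Type*} [Preorder α] [MeasurableSpace α] (μ : Measure α) :
    Antitone fun x => μ (Ioi x) :=
  fun _ _ hxy => measure_mono (Ioi_subset_Ioi hxy)

section Tail

variable {α : Type*} [LinearOrder α] [TopologicalSpace α] [OrderTopology α] [MeasurableSpace α]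
  {μ : Measure α}

theorem measure_Ioi_le_of_forall_gt [DenselyOrdered α] [NoMaxOrder α] [FirstCountableTopology α]
    {c : α} {B : ℝ≥0∞} (h : ∀ x > c, μ (Ioi x) ≤ B) : μ (Ioi c) ≤ B := by
  obtain ⟨u, hu_anti, hu_gt, hu_lim⟩ := exists_seq_strictAnti_tendsto c
  rw [← (isGLB_of_tendsto_atTop hu_anti.antitone hu_lim).iUnion_Ioi_eq,
    Monotone.measure_iUnion fun m n hmn => Ioi_subset_Ioi (hu_anti.antitone hmn)]
  exact iSup_le fun n => h _ (hu_gt n)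

theorem le_measure_Ici_of_forall_lt [DenselyOrdered α] [FirstCountableTopology α]
    [OpensMeasurableSpace α] {a c : α} {B : ℝ≥0∞} (hac : a < c) (ha : μ (Ioi a) ≠ ∞)
    (h : ∀ y ∈ Ioo a c, B ≤ μ (Ioi y)) : B ≤ μ (Ici c) := by
  obtain ⟨v, hv_mono, hv_mem, hv_lim⟩ := exists_seq_strictMono_tendsto' hac
  have hIci : ⋂ n, Ioi (v n) = Ici c := by
    rw [← compl_inj_iff, compl_iInter, compl_Ici]
    simp only [compl_Ioi]
    rw [← biUnion_range]
    exact (isLUB_of_tendsto_atTop hv_mono.monotone hv_lim).biUnion_Iic_eq_Iio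
      fun ⟨n, hn⟩ => (hv_mem n).2.ne hn
  rw [← hIci, Antitone.measure_iInter (fun m n hmn => Ioi_subset_Ioi (hv_mono.monotone hmn))
    (fun _ => measurableSet_Ioi.nullMeasurableSet)
    ⟨0, ne_top_of_le_ne_top ha (measure_mono (Ioi_subset_Ioi (hv_mem 0).1.le))⟩]
  exact le_iInf fun n => h _ (hv_mem n)

theorem tendsto_measure_Ioi_atTop [OpensMeasurableSpace α]
    [(atTop : Filter α).IsCountablyGenerated] {a : α} (ha : μ (Ioi a) ≠ ∞) :
    Tendsto (fun x => μ (Ioi x)) atTop (𝓝 0) := by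
  have hempty : ⋂ x : α, Ioi x = ∅ := iInter_eq_empty_iff.2 fun x => ⟨x, lt_irrefl x⟩
  have h := tendsto_measure_iInter_atTop (μ := μ)
    (fun _ => measurableSet_Ioi.nullMeasurableSet) (fun _ _ => Ioi_subset_Ioi) ⟨a, ha⟩
  rwa [hempty, measure_empty] at h

theorem MeasureTheory.Measure.ext_of_Iic' [SecondCountableTopology α] [BorelSpace α]
    [NoMinOrder α] (μ ν : Measure α) (hμ : ∀ b, μ (Iic b) ≠ ∞)
    (h : ∀ b, μ (Iic b) = ν (Iic b)) : μ = ν := by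
  refine ext_of_Ioc' μ ν
    (fun a b _ => ne_top_of_le_ne_top (hμ b) (measure_mono Ioc_subset_Iic_self)) fun a b hab => ?_
  have hsub : Iic a ⊆ Iic b := Iic_subset_Iic.2 hab.le
  rw [← Iic_sdiff_Iic, measure_sdiff hsub nullMeasurableSet_Iic (hμ a),
    measure_sdiff hsub nullMeasurableSet_Iic (h a ▸ hμ a), h a, h b]

end Tail

theorem measure_setOf_measure_Ioi_le (ν : Measure ℝ) [NullSingletonClass ν] {a : ℝ}
    (hfin : ∀ x > a, ν (Ioi x) ≠ ∞) (B : ℝ≥0∞) :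
    ν {x | a < x ∧ ν (Ioi x) ≤ B} = min B (ν (Ioi a)) := by
  set S := {x | a < x ∧ ν (Ioi x) ≤ B}
  rcases S.eq_empty_or_nonempty with hS | hS
  · have hB : B = 0 := by
      refine nonpos_iff_eq_zero.1
        (ge_of_tendsto (tendsto_measure_Ioi_atTop (hfin (a + 1) (by linarith))) ?_)
      filter_upwards [eventually_gt_atTop a] with x hx
      exact le_of_not_ge fun hxB => hS.subset ⟨hx, hxB⟩
    simp [hS, hB]
  obtain ⟨c, hc⟩ : ∃ c, IsGLB S c := ⟨sInf S, isGLB_csInf hS ⟨a, fun x hx => hx.1.le⟩⟩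
  have hSc : S ⊆ Ici c := fun x hx => hc.1 hx
  have hcS : Ioi c ⊆ S := fun x hx =>
    let ⟨z, hz, _, hzx⟩ := hc.exists_between hx
    ⟨hz.1.trans hzx, (antitone_measure_Ioi ν hzx.le).trans hz.2⟩
  have hνS : ν S = ν (Ioi c) :=
    le_antisymm ((measure_mono hSc).trans (measure_congr Ioi_ae_eq_Ici).ge) (measure_mono hcS)
  have hcB : ν (Ioi c) ≤ B := measure_Ioi_le_of_forall_gt fun x hx => (hcS hx).2
  rcases (hc.2 fun x hx => hx.1.le : a ≤ c).eq_or_lt with rfl | hac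
  · rw [hνS, min_eq_right hcB]
  · have hBc : B ≤ ν (Ioi c) := by
      obtain ⟨a', haa', ha'c⟩ := exists_between hac
      rw [measure_congr Ioi_ae_eq_Ici]
      refine le_measure_Ici_of_forall_lt ha'c (hfin a' haa') fun y hy => le_of_not_ge fun hyB => ?_
      exact (hc.1 ⟨haa'.trans hy.1, hyB⟩).not_gt hy.2
    rw [hνS, min_eq_left (hBc.trans (antitone_measure_Ioi ν hac.le)), le_antisymm hcB hBc]

theorem volume_Iic_inter_setOf_ofReal_lt (U : ℝ≥0∞) (b : ℝ) :
    volume (Iic b ∩ {t : ℝ | 0 < t ∧ ENNReal.ofReal t < U}) = min (ENNReal.ofReal b) U := by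
  rcases eq_top_or_lt_top U with rfl | hU
  · have hset : Iic b ∩ {t : ℝ | 0 < t ∧ ENNReal.ofReal t < ∞} = Ioc 0 b := by
      ext t; simp [and_comm]
    rw [hset, Real.volume_Ioc, sub_zero, min_eq_left le_top]
  · obtain ⟨r, rfl⟩ : ∃ r, ENNReal.ofReal r = U := ⟨U.toReal, ENNReal.ofReal_toReal hU.ne⟩
    have hset :
        Iic b ∩ {t : ℝ | 0 < t ∧ ENNReal.ofReal t < ENNReal.ofReal r} = Ioo 0 r ∩ Iic b := by
      ext t
      simp only [mem_inter_iff, mem_Iic, mem_ofPred_eq, mem_Ioo, ENNReal.ofReal_lt_ofReal_iff']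
      constructor
      · rintro ⟨htb, ht, htr, -⟩; exact ⟨⟨ht, htr⟩, htb⟩
      · rintro ⟨⟨ht, htr⟩, htb⟩; exact ⟨htb, ht, htr, ht.trans htr⟩
    rw [hset, measure_congr ((Ioo_ae_eq_Ioc (μ := volume)).inter (ae_eq_refl (Iic b))),
      Ioc_inter_Iic, Real.volume_Ioc, sub_zero, ENNReal.ofReal_min, min_comm]

theorem map_toReal_measure_Ioi_Iic (ν : Measure ℝ) [NullSingletonClass ν]
    (hsupp : ν (Iic 0) = 0) (hfin : ∀ x > 0, ν (Ioi x) ≠ ∞) (b : ℝ) :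
    ν.map (fun x => (ν (Ioi x)).toReal) (Iic b) = min (ENNReal.ofReal b) (ν (Ioi 0)) := by
  rw [Measure.map_apply (antitone_measure_Ioi ν).measurable.ennreal_toReal measurableSet_Iic]
  rcases lt_or_ge b 0 with hb | hb
  · have hempty : (fun x => (ν (Ioi x)).toReal) ⁻¹' Iic b = ∅ :=
      eq_empty_of_forall_notMem fun x hx => (ENNReal.toReal_nonneg.trans hx).not_gt hb
    simp [hempty, ENNReal.ofReal_eq_zero.2 hb.le]
  · rw [← measure_setOf_measure_Ioi_le ν hfin]
    have hpos : ∀ᵐ x ∂ν, 0 < x := by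
      rw [ae_iff]; simp only [not_lt]; exact hsupp
    refine measure_congr (hpos.mono fun x hx => propext ?_)
    show (ν (Ioi x)).toReal ≤ b ↔ 0 < x ∧ ν (Ioi x) ≤ ENNReal.ofReal b
    rw [ENNReal.le_ofReal_iff_toReal_le (hfin x hx) hb, and_iff_right hx]

theorem stmt_3 (ν : Measure ℝ) [NullSingletonClass ν]
    (hsupp : ν (Set.Iic 0) = 0) (hfin : ∀ ε > (0 : ℝ), ν (Set.Ioi ε) ≠ ⊤) :
    Measure.map (fun x : ℝ => (ν (Set.Ioi x)).toReal) ν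
      = volume.restrict {t : ℝ | 0 < t ∧ ENNReal.ofReal t < ν (Set.Ioi (0 : ℝ))} := by
  refine Measure.ext_of_Iic' _ _ (fun b => ?_) (fun b => ?_) <;>
    rw [map_toReal_measure_Ioi_Iic ν hsupp hfin]
  · exact ((min_le_left _ _).trans_lt ENNReal.ofReal_lt_top).ne
  · rw [Measure.restrict_apply measurableSet_Iic, volume_Iic_inter_setOf_ofReal_lt]
end

section
/- For any non-increasing right-continuous function U : [0,∞) → [0,∞] with generalized inverse U^{-1}(t) = inf{x ≥ 0 : U(x) ≤ t}, and for all a, b ≥ 0, the Lebesgue measure of { t ≥ 0 : U₁^{-1}(t) > a and U₂^{-1}(t) > b } equals min(U₁(a), U₂(b)), for any two such functions U₁, U₂. -/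
open MeasureTheory ENNReal

/-- Generalized (pseudo-)inverse of a tail-integral-like function `U : ℝ → ℝ≥0∞`,
`U⁻¹(t) = inf {x ≥ 0 : U x ≤ t}` (with value `∞` when the set is empty). -/
noncomputable def tailInv (U : ℝ → ℝ≥0∞) (t : ℝ≥0∞) : ℝ≥0∞ :=
  ⨅ x ∈ {x : ℝ | 0 ≤ x ∧ U x ≤ t}, ENNReal.ofReal x

/-! The generalized inverse of a non-increasing right-continuous `U` is characterized by
`a < U⁻¹(t) ↔ t < U a`, so the set in question is `{t ≥ 0 : t < min (U₁ a) (U₂ b)}`, an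
interval of length `min (U₁ a) (U₂ b)`. -/

theorem tailInv_le_ofReal {U : ℝ → ℝ≥0∞} {a : ℝ} {t : ℝ≥0∞} (ha : 0 ≤ a) (h : U a ≤ t) :
    tailInv U t ≤ ENNReal.ofReal a :=
  biInf_le _ ⟨ha, h⟩

theorem ofReal_lt_tailInv {U : ℝ → ℝ≥0∞} {a : ℝ} {t : ℝ≥0∞} (hanti : AntitoneOn U (Set.Ici 0))
    (hrc : ContinuousWithinAt U (Set.Ici a) a) (ha : 0 ≤ a) (h : t < U a) :
    ENNReal.ofReal a < tailInv U t := by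
  obtain ⟨u, hau, hu⟩ := mem_nhdsGE_iff_exists_Ico_subset.mp (hrc (isOpen_Ioi.mem_nhds h))
  have hlt_of_lt_u : ∀ x, 0 ≤ x → x < u → t < U x := fun x hx hxu =>
    (le_or_gt a x).elim (fun hax => hu ⟨hax, hxu⟩)
      (fun hxa => h.trans_le (hanti hx ha hxa.le))
  have hu_le : ENNReal.ofReal u ≤ tailInv U t :=
    le_iInf₂ fun x ⟨hx, hxt⟩ =>
      ofReal_le_ofReal (not_lt.mp fun hxu => (hlt_of_lt_u x hx hxu).not_ge hxt)
  exact ((ofReal_lt_ofReal_iff (ha.trans_lt hau)).mpr hau).trans_le hu_le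

theorem ofReal_lt_tailInv_iff {U : ℝ → ℝ≥0∞} {a : ℝ} {t : ℝ≥0∞}
    (hanti : AntitoneOn U (Set.Ici 0)) (hrc : ContinuousWithinAt U (Set.Ici a) a) (ha : 0 ≤ a) :
    ENNReal.ofReal a < tailInv U t ↔ t < U a :=
  ⟨fun h => not_le.mp fun h' => (tailInv_le_ofReal ha h').not_gt h,
    ofReal_lt_tailInv hanti hrc ha⟩

theorem volume_setOf_nonneg_ofReal_lt (m : ℝ≥0∞) :
    volume {t : ℝ | 0 ≤ t ∧ ENNReal.ofReal t < m} = m := by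
  induction m using ENNReal.recTopCoe with
  | top =>
    simp only [ofReal_lt_top, and_true]
    exact Real.volume_Ici
  | coe r =>
    have hset : {t : ℝ | 0 ≤ t ∧ ENNReal.ofReal t < r} = Set.Ico 0 (r : ℝ) := by
      ext t
      simp only [Set.mem_ofPred_eq, Set.mem_Ico, and_congr_right_iff]
      exact fun ht => ofReal_lt_coe_iff ht
    rw [hset, Real.volume_Ico, sub_zero, ofReal_coe_nnreal]

theorem stmt_6 (U₁ U₂ : ℝ → ℝ≥0∞)
    (h₁anti : AntitoneOn U₁ (Set.Ici 0)) (h₂anti : AntitoneOn U₂ (Set.Ici 0))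
    (h₁rc : ∀ x ∈ Set.Ici (0 : ℝ), ContinuousWithinAt U₁ (Set.Ici x) x)
    (h₂rc : ∀ x ∈ Set.Ici (0 : ℝ), ContinuousWithinAt U₂ (Set.Ici x) x)
    (a b : ℝ) (ha : 0 ≤ a) (hb : 0 ≤ b) :
    volume {t : ℝ | 0 ≤ t ∧ ENNReal.ofReal a < tailInv U₁ (ENNReal.ofReal t)
        ∧ ENNReal.ofReal b < tailInv U₂ (ENNReal.ofReal t)}
      = min (U₁ a) (U₂ b) := by
  simp only [ofReal_lt_tailInv_iff h₁anti (h₁rc a ha) ha,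
    ofReal_lt_tailInv_iff h₂anti (h₂rc b hb) hb, ← lt_min_iff]
  exact volume_setOf_nonneg_ofReal_lt _
end

section
/- Let ν¹, ν² be measures on Ω₁ = (0,∞) with finite second moments, and suppose ν¹ is atomless and ν¹((0,∞)) ≥ ν²((0,∞)). Let T(x) = U_{ν²}^{-1}(U_{ν¹}(x)) where U_ν is the tail integral and U_ν^{-1} its pseudo-inverse. Then the pushforward T_# ν¹ (restricted to (0,∞)) equals ν², i.e., for every b > 0, ν¹({x : T(x) > b}) = U_{ν²}(b). -/
/-!
Write `U₁ x = ν₁ (Ioi x)` and `U₂ y = ν₂ (Ioi y)`. Since `U₂` is right-continuous and tends to `0`,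
`T x ≤ b ↔ U₂ b ≤ U₁ x` as soon as `U₁ x ≠ 0`, and the set where `U₁` vanishes is `ν₁`-null.
Hence `{T > b}` agrees up to a null set with the upper set `{U₁ < U₂ b}`, whose measure is the
value of `U₁` at its infimum. As `ν₁` has no atoms, `U₁` is continuous, so that value is `U₂ b`.
-/

open MeasureTheory ENNReal Set Filter Topology

theorem IsUpperSet.Ioi_csInf_subset {α : Type*} [ConditionallyCompleteLinearOrder α]
    {s : Set α} (hs : IsUpperSet s) (hne : s.Nonempty) : Ioi (sInf s) ⊆ s := fun _ hx ↦
  let ⟨_, hz, hzx⟩ := exists_lt_of_csInf_lt hne hx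
  hs hzx.le hz

namespace MeasureTheory

variable {ν : Measure ℝ}

theorem _root_.IsUpperSet.measure_eq_measure_Ioi_csInf [NullSingletonClass ν] {s : Set ℝ}
    (hs : IsUpperSet s) (hbdd : BddBelow s) (hne : s.Nonempty) :
    ν s = ν (Ioi (sInf s)) :=
  le_antisymm ((measure_mono fun _ hx ↦ csInf_le hbdd hx).trans (measure_congr Ioi_ae_eq_Ici).ge)
    (measure_mono (hs.Ioi_csInf_subset hne))

theorem isUpperSet_setOf_measure_Ioi_lt (t : ℝ≥0∞) : IsUpperSet {x : ℝ | ν (Ioi x) < t} :=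
  fun _ _ hxy hx ↦ (measure_mono (Ioi_subset_Ioi hxy)).trans_lt hx

theorem measure_Ioi_le_of_forall_gt {a : ℝ} {t : ℝ≥0∞} (h : ∀ x > a, ν (Ioi x) ≤ t) :
    ν (Ioi a) ≤ t := by
  obtain ⟨u, hu_anti, hau, hu_lim⟩ := exists_seq_strictAnti_tendsto a
  rw [← (isGLB_of_tendsto_atTop hu_anti.antitone hu_lim).iUnion_Ioi_eq,
    Monotone.measure_iUnion fun m n hmn ↦ Ioi_subset_Ioi (hu_anti.antitone hmn)]
  exact iSup_le fun n ↦ h _ (hau n)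

theorem le_measure_Ici_of_forall_lt {a c : ℝ} (hac : a < c) (hfin : ν (Ioi a) ≠ ∞)
    {t : ℝ≥0∞} (h : ∀ x ∈ Ioo a c, t ≤ ν (Ioi x)) : t ≤ ν (Ici c) := by
  obtain ⟨u, hu_mono, hu_mem, hu_lim⟩ := exists_seq_strictMono_tendsto' hac
  have hIci : Ici c = ⋂ n, Ioi (u n) := by
    refine Subset.antisymm (fun x hx ↦ mem_iInter.2 fun n ↦ (hu_mem n).2.trans_le hx) fun x hx ↦ ?_
    exact (isLUB_of_tendsto_atTop hu_mono.monotone hu_lim).2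
      (forall_mem_range.2 fun n ↦ (mem_iInter.1 hx n).le)
  rw [hIci, Antitone.measure_iInter (fun m n hmn ↦ Ioi_subset_Ioi (hu_mono.monotone hmn))
    (fun _ ↦ measurableSet_Ioi.nullMeasurableSet)
    ⟨0, ne_top_of_le_ne_top hfin (measure_mono (Ioi_subset_Ioi (hu_mem 0).1.le))⟩]
  exact le_iInf fun n ↦ h _ (hu_mem n)

theorem tendsto_measure_Ioi_atTop (hfin : ∃ a, ν (Ioi a) ≠ ∞) :
    Tendsto (fun x ↦ ν (Ioi x)) atTop (𝓝 0) := by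
  have hempty : ⋂ x : ℝ, Ioi x = ∅ :=
    eq_empty_of_forall_notMem fun x hx ↦ lt_irrefl x (mem_iInter.1 hx x)
  simpa [Function.comp_def, hempty] using tendsto_measure_iInter_atTop (μ := ν)
    (fun _ ↦ measurableSet_Ioi.nullMeasurableSet) (fun _ _ hxy ↦ Ioi_subset_Ioi hxy) hfin

theorem measure_Ioi_ne_top_of_lintegral_sq_ne_top
    (hmom : ∫⁻ x, ENNReal.ofReal (x ^ 2) ∂ν ≠ ∞) {a : ℝ} (ha : 0 < a) : ν (Ioi a) ≠ ∞ := by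
  have ha2 : ENNReal.ofReal (a ^ 2) ≠ 0 := by positivity
  refine ne_top_of_le_ne_top (ENNReal.div_ne_top hmom ha2) ((measure_mono fun x hx ↦ ?_).trans
    (meas_ge_le_lintegral_div (by fun_prop) ha2 ofReal_ne_top))
  have hax : a < x := hx
  exact ENNReal.ofReal_le_ofReal (by nlinarith)

theorem measure_setOf_measure_Ioi_eq_zero [NullSingletonClass ν] :
    ν {x | ν (Ioi x) = 0} = 0 := by
  set Z := {x : ℝ | ν (Ioi x) = 0}
  have hZ : IsUpperSet Z := fun _ _ hxy hx ↦ measure_mono_null (Ioi_subset_Ioi hxy) hx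
  rcases Z.eq_empty_or_nonempty with hempty | hne
  · rw [hempty, measure_empty]
  by_cases hbdd : BddBelow Z
  · rw [hZ.measure_eq_measure_Ioi_csInf hbdd hne, ← nonpos_iff_eq_zero]
    exact measure_Ioi_le_of_forall_gt fun x hx ↦ (hZ.Ioi_csInf_subset hne hx).le
  · have hnull : ∀ x, ν (Ioi x) = 0 := fun x ↦
      let ⟨_, hz, hzx⟩ := not_bddBelow_iff.1 hbdd x
      measure_mono_null (Ioi_subset_Ioi hzx.le) hz
    refine measure_mono_null (subset_univ Z) ?_
    rw [← iUnion_Ioi, Antitone.measure_iUnion fun _ _ hxy ↦ Ioi_subset_Ioi hxy]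
    simp [hnull]

theorem measure_setOf_measure_Ioi_lt [NullSingletonClass ν] (hfin : ∀ x > 0, ν (Ioi x) ≠ ∞)
    {t : ℝ≥0∞} (ht : t ≤ ν (Ioi 0)) : ν {x | ν (Ioi x) < t} = t := by
  set R := {x : ℝ | ν (Ioi x) < t}
  rcases eq_zero_or_pos t with rfl | ht0
  · simp [R]
  have hpos : R ⊆ Ioi 0 := fun x hx ↦
    not_le.1 fun hx0 ↦ (hx.trans_le ((measure_mono (Ioi_subset_Ioi hx0)).trans' ht)).false
  have hne : R.Nonempty :=
    ((tendsto_measure_Ioi_atTop ⟨1, hfin 1 one_pos⟩).eventually (gt_mem_nhds ht0)).exists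
  have hbdd : BddBelow R := ⟨0, fun x hx ↦ (hpos hx).le⟩
  have hR : IsUpperSet R := isUpperSet_setOf_measure_Ioi_lt t
  have hc : 0 ≤ sInf R := le_csInf hne fun x hx ↦ (hpos hx).le
  rw [hR.measure_eq_measure_Ioi_csInf hbdd hne]
  refine le_antisymm (measure_Ioi_le_of_forall_gt fun x hx ↦ (hR.Ioi_csInf_subset hne hx).le) ?_
  rcases hc.eq_or_lt with hc0 | hc0
  · rwa [← hc0]
  rw [measure_congr Ioi_ae_eq_Ici]
  exact le_measure_Ici_of_forall_lt (half_lt_self hc0) (hfin _ (half_pos hc0)) fun x hx ↦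
    not_lt.1 fun hxR ↦ (csInf_le hbdd hxR).not_gt hx.2

/-- The pseudo-inverse `U_ν⁻¹ s` of the tail `U_ν x = ν (Ioi x)`; it takes the junk value
`sInf ∅ = 0` when no tail on `[0, ∞)` is `≤ s`. -/
noncomputable def tailInv (ν : Measure ℝ) (s : ℝ≥0∞) : ℝ :=
  sInf {y : ℝ | 0 ≤ y ∧ ν (Ioi y) ≤ s}

theorem tailInv_le_of_measure_Ioi_le {s : ℝ≥0∞} {b : ℝ} (hb : 0 ≤ b) (h : ν (Ioi b) ≤ s) :
    tailInv ν s ≤ b :=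
  csInf_le ⟨0, fun _ hy ↦ hy.1⟩ ⟨hb, h⟩

theorem measure_Ioi_le_of_tailInv_le (hν : Tendsto (fun x ↦ ν (Ioi x)) atTop (𝓝 0))
    {s : ℝ≥0∞} (hs : s ≠ 0) {b : ℝ} (h : tailInv ν s ≤ b) : ν (Ioi b) ≤ s := by
  obtain ⟨y, hy, hy0⟩ :=
    ((hν.eventually (gt_mem_nhds hs.bot_lt)).and (eventually_ge_atTop 0)).exists
  refine measure_Ioi_le_of_forall_gt fun x hx ↦ ?_
  have hne : {y : ℝ | 0 ≤ y ∧ ν (Ioi y) ≤ s}.Nonempty := ⟨y, hy0, hy.le⟩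
  obtain ⟨z, hz, hzx⟩ := exists_lt_of_csInf_lt hne (h.trans_lt hx)
  exact (measure_mono (Ioi_subset_Ioi hzx.le)).trans hz.2

end MeasureTheory

theorem stmt_13_general (ν₁ ν₂ : Measure ℝ) [NullSingletonClass ν₁]
    (h₁mom : ∫⁻ x, ENNReal.ofReal (x ^ 2) ∂ν₁ ≠ ⊤)
    (h₂mom : ∫⁻ x, ENNReal.ofReal (x ^ 2) ∂ν₂ ≠ ⊤)
    (hmass : ν₂ (Set.Ioi 0) ≤ ν₁ (Set.Ioi 0))
    -- `T = U_{ν²}^{-1} ∘ U_{ν¹}`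
    (T : ℝ → ℝ)
    (hT : ∀ x, T x = sInf {y : ℝ | 0 ≤ y ∧ ν₂ (Set.Ioi y) ≤ ν₁ (Set.Ioi x)}) :
    ∀ b > (0 : ℝ), ν₁ {x : ℝ | b < T x} = ν₂ (Set.Ioi b) := by
  intro b hb
  have hT' : ∀ x, T x = tailInv ν₂ (ν₁ (Ioi x)) := hT
  have h₂tail : Tendsto (fun y ↦ ν₂ (Ioi y)) atTop (𝓝 0) :=
    tendsto_measure_Ioi_atTop ⟨1, measure_Ioi_ne_top_of_lintegral_sq_ne_top h₂mom one_pos⟩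
  set t := ν₂ (Ioi b)
  have hsub : {x | b < T x} ⊆ {x | ν₁ (Ioi x) < t} := fun x hx ↦
    not_le.1 fun h ↦ (hT' x ▸ tailInv_le_of_measure_Ioi_le hb.le h).not_gt hx
  have hsup : {x | ν₁ (Ioi x) < t} \ {x | ν₁ (Ioi x) = 0} ⊆ {x | b < T x} := fun x hx ↦
    not_le.1 fun h ↦ hx.1.not_ge (measure_Ioi_le_of_tailInv_le h₂tail hx.2 (hT' x ▸ h))
  calc ν₁ {x | b < T x} = ν₁ {x | ν₁ (Ioi x) < t} :=
        le_antisymm (measure_mono hsub)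
          ((measure_sdiff_null measure_setOf_measure_Ioi_eq_zero).ge.trans (measure_mono hsup))
    _ = t := measure_setOf_measure_Ioi_lt
        (fun _ hx ↦ measure_Ioi_ne_top_of_lintegral_sq_ne_top h₁mom hx)
        ((measure_mono (Ioi_subset_Ioi hb.le)).trans hmass)

theorem stmt_13 (ν₁ ν₂ : Measure ℝ) [NullSingletonClass ν₁]
    (h₁supp : ν₁ (Set.Iic 0) = 0) (h₂supp : ν₂ (Set.Iic 0) = 0)
    (h₁mom : ∫⁻ x, ENNReal.ofReal (x ^ 2) ∂ν₁ ≠ ⊤)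
    (h₂mom : ∫⁻ x, ENNReal.ofReal (x ^ 2) ∂ν₂ ≠ ⊤)
    (hmass : ν₂ (Set.Ioi 0) ≤ ν₁ (Set.Ioi 0))
    -- `T = U_{ν²}^{-1} ∘ U_{ν¹}`
    (T : ℝ → ℝ)
    (hT : ∀ x, T x = sInf {y : ℝ | 0 ≤ y ∧ ν₂ (Set.Ioi y) ≤ ν₁ (Set.Ioi x)}) :
    ∀ b > (0 : ℝ), ν₁ {x : ℝ | b < T x} = ν₂ (Set.Ioi b) :=
  stmt_13_general ν₁ ν₂ h₁mom h₂mom hmass T hT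
end
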